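/- arXiv:0904.2078 — 2 statements merged into one kernel-verified Lean document; each statement's English description precedes it below -/
import Mathlib

section
/- There exists a unique positive real number γ such that γ·√3·cosh(πγ/2) = 8·sinh(πγ/6). -/
/-!
The function `f γ = √3 γ cosh (π γ / 2) - 8 sinh (π γ / 6)` vanishes at `0` and is strictly convex
on `[0, ∞)`: for `γ > 0` the term `√3 π sinh (π γ / 2)` of `f''` already dominates
`(2 π² / 9) sinh (π γ / 6)`. A strictly convex function takes the value `f 0` at most once more,
so `f` has at most one positive zero, and it has one because `f (1 / 2) < 0 < f 2`.
-/

open Real Set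

theorem StrictConvexOn.eq_of_apply_eq_apply {𝕜 : Type*} [Field 𝕜] [LinearOrder 𝕜]
    [IsStrictOrderedRing 𝕜] {s : Set 𝕜} {f : 𝕜 → 𝕜} (hf : StrictConvexOn 𝕜 s f) {a x y : 𝕜}
    (ha : a ∈ s) (hx : x ∈ s) (hy : y ∈ s) (hxa : x ≠ a) (hya : y ≠ a) (hfx : f x = f a)
    (hfy : f y = f a) : x = y := by
  by_contra hxy
  rcases lt_or_gt_of_ne hxy with hxy | hyx
  · simpa [hfx, hfy] using hf.secant_strict_mono ha hx hy hxa hya hxy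
  · simpa [hfx, hfy] using hf.secant_strict_mono ha hy hx hya hxa hyx

theorem StrictConvexOn.existsUnique_pos_eq_zero {f : ℝ → ℝ} (hf : StrictConvexOn ℝ (Ici 0) f)
    (hf0 : f 0 = 0) {a b : ℝ} (ha : 0 < a) (hb : 0 < b) (hfa : f a ≤ 0) (hfb : 0 ≤ f b) :
    ∃! x, 0 < x ∧ f x = 0 := by
  have hab : uIcc a b ⊆ Ioi 0 := fun x hx => lt_of_lt_of_le (lt_min ha hb) hx.1
  have hcont : ContinuousOn f (uIcc a b) :=
    hf.convexOn.continuousOn_interior.mono (by rwa [interior_Ici])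
  obtain ⟨x, hx, hfx⟩ := intermediate_value_uIcc hcont (mem_uIcc.2 (Or.inl ⟨hfa, hfb⟩))
  have hx0 : 0 < x := hab hx
  refine ⟨x, ⟨hx0, hfx⟩, fun y ⟨hy, hfy⟩ => ?_⟩
  exact hf.eq_of_apply_eq_apply self_mem_Ici hy.le hx0.le hy.ne' hx0.ne'
    (hfy.trans hf0.symm) (hfx.trans hf0.symm)

section MulCoshSubSinh

variable {a b c d : ℝ}

theorem hasDerivAt_mul_cosh_sub_sinh (x : ℝ) :
    HasDerivAt (fun x => c * x * cosh (a * x) - d * sinh (b * x))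
      (c * cosh (a * x) + c * a * x * sinh (a * x) - d * b * cosh (b * x)) x := by
  refine (((hasDerivAt_const_mul c).mul (hasDerivAt_const_mul a).cosh).sub
    ((hasDerivAt_const_mul b).sinh.const_mul d)).congr_deriv ?_
  ring

theorem hasDerivAt_deriv_mul_cosh_sub_sinh (x : ℝ) :
    HasDerivAt (fun x => c * cosh (a * x) + c * a * x * sinh (a * x) - d * b * cosh (b * x))
      (2 * c * a * sinh (a * x) + c * a ^ 2 * x * cosh (a * x) - d * b ^ 2 * sinh (b * x)) x := by
  refine ((((hasDerivAt_const_mul a).cosh.const_mul c).add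
    ((hasDerivAt_const_mul (c * a)).mul (hasDerivAt_const_mul a).sinh)).sub
    ((hasDerivAt_const_mul b).cosh.const_mul (d * b))).congr_deriv ?_
  ring

theorem strictConvexOn_mul_cosh_sub_sinh (hc : 0 < c) (ha : 0 < a) (hb : 0 ≤ b) (hba : b ≤ a)
    (hd : d * b ^ 2 ≤ 2 * c * a) :
    StrictConvexOn ℝ (Ici 0) fun x => c * x * cosh (a * x) - d * sinh (b * x) := by
  refine strictConvexOn_of_deriv2_pos (convex_Ici 0) (by fun_prop) fun x hx => ?_
  replace hx : 0 < x := by simpa using hx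
  rw [Function.iterate_succ_apply, Function.iterate_one,
    funext fun x => (hasDerivAt_mul_cosh_sub_sinh (a := a) (b := b) (c := c) (d := d) x).deriv,
    (hasDerivAt_deriv_mul_cosh_sub_sinh x).deriv]
  have hsinh_nonneg : 0 ≤ sinh (b * x) := sinh_nonneg_iff.2 (by positivity)
  have hsinh_le : sinh (b * x) ≤ sinh (a * x) := sinh_le_sinh.2 (by nlinarith)
  have hcosh_term : 0 < c * a ^ 2 * x * cosh (a * x) := by positivity
  nlinarith [mul_le_mul_of_nonneg_right hd hsinh_nonneg,
    mul_le_mul_of_nonneg_left hsinh_le (by positivity : 0 ≤ 2 * c * a)]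

end MulCoshSubSinh

noncomputable def gammaDefect (γ : ℝ) : ℝ :=
  √3 * γ * cosh (π / 2 * γ) - 8 * sinh (π / 6 * γ)

theorem strictConvexOn_gammaDefect : StrictConvexOn ℝ (Ici 0) gammaDefect :=
  strictConvexOn_mul_cosh_sub_sinh (by positivity) (by positivity) (by positivity)
    (by linarith [pi_pos])
    (by nlinarith [pi_pos, pi_lt_four, (lt_sqrt zero_le_one).2 (by norm_num : (1 : ℝ) ^ 2 < 3)])

theorem cosh_one_lt_two : cosh 1 < 2 := by
  rw [cosh_eq]
  linarith [exp_one_lt_d9, exp_lt_one_iff.2 (neg_one_lt_zero : (-1 : ℝ) < 0)]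

theorem gammaDefect_one_half_neg : gammaDefect (1 / 2) < 0 := by
  have hsqrt : √3 < 2 := (sqrt_lt' two_pos).2 (by norm_num)
  have hcosh : cosh (π / 2 * (1 / 2)) < 2 :=
    (cosh_le_cosh.2 (by rw [abs_one, abs_of_pos (by positivity)]; linarith [pi_lt_four])).trans_lt
      cosh_one_lt_two
  have hsinh : π / 6 * (1 / 2) < sinh (π / 6 * (1 / 2)) := self_lt_sinh_iff.2 (by positivity)
  unfold gammaDefect
  nlinarith [pi_gt_three, sqrt_nonneg 3, cosh_pos (π / 2 * (1 / 2))]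

theorem gammaDefect_two_pos : 0 < gammaDefect 2 := by
  have hsqrt : 4 / 3 < √3 := (lt_sqrt (by norm_num)).2 (by norm_num)
  have hsinh : 0 < sinh (π / 3) := sinh_pos_iff.2 (by positivity)
  -- `cosh π > sinh π = sinh (3 (π / 3)) ≥ 3 sinh (π / 3)`
  have hcosh : 3 * sinh (π / 3) < cosh π := by
    have := sinh_three_mul (π / 3)
    rw [mul_div_cancel₀ π three_ne_zero] at this
    nlinarith [sinh_lt_cosh π, pow_pos hsinh 3]
  unfold gammaDefect
  rw [div_mul_cancel₀ π two_ne_zero, show π / 6 * 2 = π / 3 by ring]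
  nlinarith

/-- There exists a unique positive real number `γ` such that
`γ·√3·cosh(πγ/2) = 8·sinh(πγ/6)`. -/
theorem exists_unique_gamma0 :
    ∃! γ : ℝ, 0 < γ ∧
      γ * Real.sqrt 3 * Real.cosh (Real.pi * γ / 2) = 8 * Real.sinh (Real.pi * γ / 6) := by
  refine (existsUnique_congr fun γ => ?_).2 <|
    strictConvexOn_gammaDefect.existsUnique_pos_eq_zero (by simp [gammaDefect]) one_half_pos
      two_pos gammaDefect_one_half_neg.le gammaDefect_two_pos.le
  rw [gammaDefect, sub_eq_zero, mul_comm γ, mul_div_right_comm π, mul_div_right_comm π]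
end

section
/- Let H be a Hilbert space, let A₀(z) and A₁(z) be compact self-adjoint operators on H for z < 0 such that z ↦ A₀(z) is norm-continuous on (−∞,0) and z ↦ A₁(z) is norm-continuous on (−∞,0] (i.e. A₁ extends norm-continuously to z = 0, with A₁(0) compact). Let f : (−∞,0) → ℝ satisfy f(z) → 0 as z → 0⁻, and suppose that for every γ > 0 the limit lim_{z→0⁻} f(z)·d(γ, A₀(z)) = l(γ) exists and l is continuous on (0,∞). Then for every γ > 0 one also has lim_{z→0⁻} f(z)·d(γ, A₀(z)+A₁(z)) = l(γ). -/
/-!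
If `F` is a subspace of maximal dimension on which `⟪A u, u⟫ > λ‖u‖²`, the form is `≤ λ‖u‖²` on
the complement of `F` orthogonal for the polarized form, a subspace of codimension `dim F`.
Intersecting two such complements gives Weyl's inequality
`d(λ₁ + λ₂, A + B) ≤ d(λ₁, A) + d(λ₂, B)`. For compact `A` and `λ > 0` the counts are finite,
because `A` maps an orthonormal basis of such an `F` to a `λ`-separated subset of the relatively
compact set `A(B(0, 1))`.

Once `‖A₁(z) - A₁(0)‖ ≤ ε/2`, Weyl's inequality traps `d(γ, A₀(z) + A₁(z))` between
`d(γ + ε, A₀(z)) - d(ε/2, -A₁(0))` and `d(γ - ε, A₀(z)) + d(ε/2, A₁(0))`. The corrections are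
independent of `z` and killed by `f(z) → 0`, so `f(z) d(γ, A₀(z) + A₁(z))` is eventually squeezed
between values close to `l(γ - ε)` and `l(γ + ε)`, and continuity of `l` at `γ` concludes.
-/

open MeasureTheory Real Filter

noncomputable section

/-- `d(λ, A)` relative to a subset `S` of the Hilbert space: the supremum of the dimensions
of finite-dimensional subspaces `F ⊆ S` such that `⟨Au, u⟩ > λ‖u‖²` for every nonzero
`u ∈ F`.  For `S = Set.univ` this is the quantity `d(λ, A)` of the Birman–Schwinger
principle. -/
def dOn {E : Type*} [NormedAddCommGroup E] [InnerProductSpace ℝ E]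
    (S : Set E) (lam : ℝ) (A : E →L[ℝ] E) : ℕ∞ :=
  ⨆ F : {F : Submodule ℝ E // (F : Set E) ⊆ S ∧ FiniteDimensional ℝ F ∧
      ∀ u ∈ F, u ≠ 0 → lam * ‖u‖ ^ 2 < (inner ℝ (A u) u : ℝ)},
    (Module.finrank ℝ (F : Submodule ℝ E) : ℕ∞)

open Module Set Metric Topology

theorem Metric.packingNumber_lt_top_of_isCompact_closure {X : Type*} [PseudoMetricSpace X]
    {ε : NNReal} (hε : ε ≠ 0) {s : Set X} (hs : IsCompact (closure s)) :
    packingNumber ε s < ⊤ := by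
  obtain ⟨N, -, hN, hcover⟩ :=
    exists_finite_isCover_of_isCompact_closure (ε := ε / 2) (by simpa) hs
  calc packingNumber ε s = packingNumber (2 * (ε / 2)) s := by rw [mul_div_cancel₀ _ two_ne_zero]
    _ ≤ externalCoveringNumber (ε / 2) s := packingNumber_two_mul_le_externalCoveringNumber _ _
    _ ≤ N.encard := hcover.externalCoveringNumber_le_encard
    _ < ⊤ := hN.encard_lt_top

theorem tendsto_of_forall_eventually_mem_uIcc {α : Type*} {l : Filter α} {g : α → ℝ} {c : ℝ}
    (h : ∀ δ > 0, ∃ u v : α → ℝ, ∃ p ∈ ball c δ, ∃ q ∈ ball c δ,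
      Tendsto u l (𝓝 p) ∧ Tendsto v l (𝓝 q) ∧ ∀ᶠ x in l, g x ∈ uIcc (u x) (v x)) :
    Tendsto g l (𝓝 c) := by
  refine Metric.tendsto_nhds.2 fun δ hδ => ?_
  obtain ⟨u, v, p, hp, q, hq, hu, hv, hg⟩ := h δ hδ
  filter_upwards [hu.eventually (isOpen_ball.mem_nhds hp), hv.eventually (isOpen_ball.mem_nhds hq),
    hg] with x hux hvx hgx
  exact (Real.ball_eq_Ioo c δ ▸ ordConnected_Ioo).uIcc_subset hux hvx hgx

theorem ContinuousAt.exists_sub_add_mem_ball {l : ℝ → ℝ} {x c δ : ℝ} (hl : ContinuousAt l x)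
    (hc : 0 < c) (hδ : 0 < δ) :
    ∃ ε ∈ Ioo 0 c, l (x - ε) ∈ ball (l x) δ ∧ l (x + ε) ∈ ball (l x) δ := by
  have hsub : Tendsto (fun ε => x - ε) (𝓝[>] 0) (𝓝 x) :=
    tendsto_nhdsWithin_of_tendsto_nhds (by simpa using (continuous_sub_left x).tendsto 0)
  have hadd : Tendsto (fun ε => x + ε) (𝓝[>] 0) (𝓝 x) :=
    tendsto_nhdsWithin_of_tendsto_nhds (by simpa using (continuous_const_add x).tendsto 0)
  obtain ⟨ε, hε_sub, hε_add, hεc, hε⟩ :=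
    ((hl.tendsto.comp hsub).eventually (ball_mem_nhds _ hδ) |>.and <|
      (hl.tendsto.comp hadd).eventually (ball_mem_nhds _ hδ) |>.and <|
      (eventually_nhdsWithin_of_eventually_nhds (eventually_lt_nhds hc)).and
        self_mem_nhdsWithin).exists
  exact ⟨ε, ⟨hε, hεc⟩, hε_sub, hε_add⟩

section FormGt

variable {H : Type*} [NormedAddCommGroup H] [InnerProductSpace ℝ H]

def FormGt (lam : ℝ) (A : H →L[ℝ] H) (F : Submodule ℝ H) : Prop :=
  ∀ u ∈ F, u ≠ 0 → lam * ‖u‖ ^ 2 < inner ℝ (A u) u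

variable {lam : ℝ} {A : H →L[ℝ] H}

theorem le_dOn_univ {F : Submodule ℝ H} [FiniteDimensional ℝ F] (hF : FormGt lam A F) :
    (finrank ℝ F : ℕ∞) ≤ dOn univ lam A :=
  le_iSup_of_le (ι := {F : Submodule ℝ H // (F : Set H) ⊆ univ ∧ FiniteDimensional ℝ F ∧
      FormGt lam A F}) ⟨F, subset_univ _, inferInstance, hF⟩ le_rfl

theorem dOn_univ_le {n : ℕ∞}
    (h : ∀ F : Submodule ℝ H, FiniteDimensional ℝ F → FormGt lam A F → (finrank ℝ F : ℕ∞) ≤ n) :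
    dOn univ lam A ≤ n :=
  iSup_le fun F => h F.1 F.2.2.1 F.2.2.2

theorem exists_formGt_finrank_eq_dOn_univ (h : dOn univ lam A ≠ ⊤) :
    ∃ F : Submodule ℝ H, FiniteDimensional ℝ F ∧ FormGt lam A F ∧
      (finrank ℝ F : ℕ∞) = dOn univ lam A := by
  obtain ⟨F, hF⟩ := @ENat.exists_eq_iSup_of_lt_top _ _
    ⟨⟨⊥, subset_univ _, inferInstance, fun u hu hu0 => absurd ((Submodule.mem_bot ℝ).1 hu) hu0⟩⟩
    h.lt_top
  exact ⟨F.1, F.2.2.1, F.2.2.2, hF⟩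

theorem dOn_univ_le_of_norm_sub_le {B : H →L[ℝ] H} {δ : ℝ} (h : ‖A - B‖ ≤ δ) :
    dOn univ (lam + δ) A ≤ dOn univ lam B := by
  refine dOn_univ_le fun F _ hF => le_dOn_univ fun u hu hu0 => ?_
  have hdiff : inner ℝ ((A - B) u) u ≤ δ * ‖u‖ ^ 2 :=
    calc inner ℝ ((A - B) u) u ≤ ‖A - B‖ * ‖u‖ * ‖u‖ :=
          (real_inner_le_norm _ _).trans (by gcongr; exact (A - B).le_opNorm u)
      _ ≤ δ * ‖u‖ ^ 2 := by rw [mul_assoc, ← sq]; gcongr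
  rw [sub_apply, inner_sub_left] at hdiff
  linarith [hF u hu hu0]

theorem FormGt.mul_norm_lt_norm_apply {F : Submodule ℝ H} (hF : FormGt lam A F) {u : H}
    (hu : u ∈ F) (hu0 : u ≠ 0) : lam * ‖u‖ < ‖A u‖ := by
  have h := (hF u hu hu0).trans_le (real_inner_le_norm (A u) u)
  rw [sq, ← mul_assoc] at h
  exact lt_of_mul_lt_mul_right h (norm_nonneg u)

/-- Twice the polarization of `u ↦ ⟪A u, u⟫ - lam ‖u‖²`. -/
def polarForm (lam : ℝ) (A : H →L[ℝ] H) : H →ₗ[ℝ] H →ₗ[ℝ] ℝ :=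
  LinearMap.mk₂ ℝ (fun u v => inner ℝ (A u) v + inner ℝ (A v) u - 2 * lam * inner ℝ u v)
    (fun u₁ u₂ v => by simp only [map_add, inner_add_left, inner_add_right]; ring)
    (fun c u v => by simp only [map_smul, inner_smul_left, inner_smul_right, smul_eq_mul,
      RCLike.conj_to_real]; ring)
    (fun u v₁ v₂ => by simp only [map_add, inner_add_left, inner_add_right]; ring)
    (fun c u v => by simp only [map_smul, inner_smul_left, inner_smul_right, smul_eq_mul,
      RCLike.conj_to_real]; ring)

theorem polarForm_apply (u v : H) : polarForm lam A u v =
    inner ℝ (A u) v + inner ℝ (A v) u - 2 * lam * inner ℝ u v := rfl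

theorem polarForm_comm (u v : H) : polarForm lam A u v = polarForm lam A v u := by
  simp only [polarForm_apply, real_inner_comm u v]; ring

theorem polarForm_self (u : H) :
    polarForm lam A u u = 2 * (inner ℝ (A u) u - lam * ‖u‖ ^ 2) := by
  rw [polarForm_apply, real_inner_self_eq_norm_sq]; ring

theorem formGt_iff_polarForm_pos {F : Submodule ℝ H} :
    FormGt lam A F ↔ ∀ u ∈ F, u ≠ 0 → 0 < polarForm lam A u u := by
  simp only [FormGt, polarForm_self]
  refine forall₂_congr fun u _ => imp_congr_right fun _ => ?_
  constructor <;> intro h <;> linarith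

/-- Otherwise `F ⊔ ℝ ∙ u` would be a larger subspace on which the form exceeds `lam`. -/
theorem inner_le_of_polarForm_eq_zero {F : Submodule ℝ H} [FiniteDimensional ℝ F]
    (hF : FormGt lam A F) (hmax : dOn univ lam A ≤ finrank ℝ F) {u : H}
    (hu : ∀ f ∈ F, polarForm lam A u f = 0) : inner ℝ (A u) u ≤ lam * ‖u‖ ^ 2 := by
  by_contra! hlt
  have hpos : 0 < polarForm lam A u u := by rw [polarForm_self]; linarith
  have huF : u ∉ F := fun h => (hu u h ▸ hpos).false
  have hF' : FormGt lam A (F ⊔ ℝ ∙ u) := by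
    rw [formGt_iff_polarForm_pos] at hF ⊢
    rintro w hw hw0
    obtain ⟨f, hf, v, hv, rfl⟩ := Submodule.mem_sup.1 hw
    obtain ⟨t, rfl⟩ := Submodule.mem_span_singleton.1 hv
    have hfu : polarForm lam A f u = 0 := by rw [polarForm_comm]; exact hu f hf
    have hexp : polarForm lam A (f + t • u) (f + t • u) =
        polarForm lam A f f + t ^ 2 * polarForm lam A u u := by
      simp only [map_add, map_smul, LinearMap.add_apply, LinearMap.smul_apply, smul_eq_mul,
        hfu, hu f hf]
      ring
    rw [hexp]
    rcases eq_or_ne f 0 with rfl | hf0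
    · have ht : t ≠ 0 := by rintro rfl; simp at hw0
      simp only [map_zero, zero_add]
      positivity
    · have := hF f hf hf0
      positivity
  have hlt : finrank ℝ F < finrank ℝ ↥(F ⊔ ℝ ∙ u) :=
    Submodule.finrank_lt_finrank_of_lt <| SetLike.lt_iff_le_and_exists.2
      ⟨le_sup_left, u, Submodule.mem_sup_right (Submodule.mem_span_singleton_self u), huF⟩
  have := (le_dOn_univ hF').trans hmax
  exact_mod_cast this.not_gt (by exact_mod_cast hlt)

theorem dOn_univ_add_le (lam₁ lam₂ : ℝ) (A B : H →L[ℝ] H) :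
    dOn univ (lam₁ + lam₂) (A + B) ≤ dOn univ lam₁ A + dOn univ lam₂ B := by
  rcases eq_or_ne (dOn univ lam₁ A) ⊤ with hA | hA
  · simp [hA]
  rcases eq_or_ne (dOn univ lam₂ B) ⊤ with hB | hB
  · simp [hB]
  obtain ⟨F₁, _, hF₁, hd₁⟩ := exists_formGt_finrank_eq_dOn_univ hA
  obtain ⟨F₂, _, hF₂, hd₂⟩ := exists_formGt_finrank_eq_dOn_univ hB
  refine dOn_univ_le fun F _ hF => ?_
  rw [← hd₁, ← hd₂, ← Nat.cast_add, Nat.cast_le]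
  by_contra! hlt
  let φ : F →ₗ[ℝ] (F₁ →ₗ[ℝ] ℝ) × (F₂ →ₗ[ℝ] ℝ) :=
    (((polarForm lam₁ A).compl₂ F₁.subtype).prod ((polarForm lam₂ B).compl₂ F₂.subtype)).comp
      F.subtype
  have hker : LinearMap.ker φ ≠ ⊥ := LinearMap.ker_ne_bot_of_finrank_lt <| by
    rwa [finrank_prod, finrank_linearMap_self, finrank_linearMap_self]
  obtain ⟨⟨u, huF⟩, hu, hu0⟩ := Submodule.exists_mem_ne_zero_of_ne_bot hker
  rw [LinearMap.mem_ker] at hu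
  have h₁ := inner_le_of_polarForm_eq_zero hF₁ hd₁.ge fun f hf => by
    simpa [φ] using congrArg (fun p => p.1 ⟨f, hf⟩) hu
  have h₂ := inner_le_of_polarForm_eq_zero hF₂ hd₂.ge fun f hf => by
    simpa [φ] using congrArg (fun p => p.2 ⟨f, hf⟩) hu
  have := hF u huF (by simpa using hu0)
  rw [add_apply, inner_add_left] at this
  linarith

/-- `A` maps an orthonormal basis of a subspace on which the form exceeds `lam` to a
`lam`-separated family. -/
theorem dOn_univ_le_packingNumber (hlam : 0 ≤ lam) :
    dOn univ lam A ≤ packingNumber lam.toNNReal (A '' closedBall 0 1) := by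
  refine dOn_univ_le fun F _ hF => ?_
  let b := stdOrthonormalBasis ℝ F
  have hsep : ∀ i j, i ≠ j → lam < dist (A (b i)) (A (b j)) := by
    intro i j hij
    have hne : (b i : H) - b j ≠ 0 :=
      sub_ne_zero.2 (Subtype.coe_injective.ne (b.orthonormal.linearIndependent.injective.ne hij))
    have hnorm : 1 ≤ ‖(b i : H) - b j‖ := by
      rw [← Submodule.coe_sub, Submodule.norm_coe]
      refine one_le_sq_iff_one_le_abs _ |>.1 ?_ |>.trans_eq (abs_norm _)
      rw [norm_sub_sq_real, b.orthonormal.1 i, b.orthonormal.1 j, b.orthonormal.2 hij]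
      norm_num
    rw [dist_eq_norm, ← map_sub]
    calc lam ≤ lam * ‖(b i : H) - b j‖ := le_mul_of_one_le_right hlam hnorm
      _ < _ := hF.mul_norm_lt_norm_apply (F.sub_mem (b i).2 (b j).2) hne
  have hinj : Function.Injective fun i => A (b i) := fun i j h => by
    by_contra hij
    have := hsep i j hij
    simp only [h, dist_self] at this
    linarith
  calc (finrank ℝ F : ℕ∞) = ENat.card (Fin (finrank ℝ F)) := by simp
    _ ≤ (range fun i => A (b i)).encard := hinj.encard_range
    _ ≤ _ := by
      refine IsSeparated.encard_le_packingNumber ?_ ?_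
      · rintro _ ⟨i, rfl⟩
        exact ⟨b i, by rw [mem_closedBall_zero_iff, Submodule.norm_coe, b.orthonormal.1 i], rfl⟩
      · rintro _ ⟨i, rfl⟩ _ ⟨j, rfl⟩ hij
        rw [edist_dist]
        exact (ENNReal.ofReal_lt_ofReal_iff_of_nonneg hlam).2
          (hsep i j (by rintro rfl; exact hij rfl))

theorem dOn_univ_lt_top (hA : IsCompactOperator A) (hlam : 0 < lam) : dOn univ lam A < ⊤ :=
  (dOn_univ_le_packingNumber hlam.le).trans_lt <| packingNumber_lt_top_of_isCompact_closure
    (by simpa using hlam) (hA.isCompact_closure_image_closedBall 1)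

theorem toNat_dOn_univ_add_le {B B₀ : H →L[ℝ] H} (hA : IsCompactOperator A)
    (hB₀ : IsCompactOperator B₀) {δ : ℝ} (hlam : 0 < lam) (hδ : 0 < δ) (hB : ‖B - B₀‖ ≤ δ) :
    (dOn univ (lam + δ + δ) (A + B)).toNat ≤ (dOn univ lam A).toNat + (dOn univ δ B₀).toNat := by
  have hle : dOn univ (lam + δ + δ) (A + B) ≤ dOn univ lam A + dOn univ δ B₀ :=
    calc dOn univ (lam + δ + δ) (A + B) ≤ dOn univ lam A + dOn univ (δ + δ) B := by
          rw [add_assoc]; exact dOn_univ_add_le _ _ _ _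
      _ ≤ dOn univ lam A + dOn univ δ B₀ := add_le_add_right (dOn_univ_le_of_norm_sub_le hB) _
  have hA' := (dOn_univ_lt_top hA hlam).ne
  have hB₀' := (dOn_univ_lt_top hB₀ hδ).ne
  rw [← ENat.toNat_add hA' hB₀']
  exact ENat.toNat_le_toNat hle (by simp [hA', hB₀'])

theorem toNat_dOn_univ_add_mem_Icc {B B₀ : H →L[ℝ] H} (hA : IsCompactOperator A)
    (hB : IsCompactOperator B) (hB₀ : IsCompactOperator B₀) {γ ε : ℝ} (hε : ε ∈ Ioo 0 γ)
    (hBB₀ : ‖B - B₀‖ ≤ ε / 2) :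
    ((dOn univ γ (A + B)).toNat : ℝ) ∈
      Icc ((dOn univ (γ + ε) A).toNat - (dOn univ (ε / 2) (-B₀)).toNat : ℝ)
        ((dOn univ (γ - ε) A).toNat + (dOn univ (ε / 2) B₀).toNat) := by
  have hγ : 0 < γ := hε.1.trans hε.2
  have hup := toNat_dOn_univ_add_le hA hB₀ (sub_pos.2 hε.2) (half_pos hε.1) hBB₀
  have hAB : IsCompactOperator (A + B) := by simpa using hA.add hB
  have hlow := toNat_dOn_univ_add_le (B := -B) hAB hB₀.neg hγ (half_pos hε.1)
    (by rwa [← neg_sub', norm_neg])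
  rw [show γ - ε + ε / 2 + ε / 2 = γ by ring] at hup
  rw [add_neg_cancel_right, show γ + ε / 2 + ε / 2 = γ + ε by ring] at hlow
  constructor
  · have := (Nat.cast_le (α := ℝ)).2 hlow
    push_cast at this
    linarith
  · exact_mod_cast hup

end FormGt

theorem weighted_counting_perturbation_general
    {H : Type*} [NormedAddCommGroup H] [InnerProductSpace ℝ H]
    (A₀ A₁ : ℝ → H →L[ℝ] H)
    (hA₀compact : ∀ z : ℝ, z < 0 → IsCompactOperator (A₀ z))
    (hA₁compact : ∀ z : ℝ, z ≤ 0 → IsCompactOperator (A₁ z))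
    (hA₁cont : ContinuousOn A₁ (Set.Iic 0))
    (f : ℝ → ℝ) (hf : Tendsto f (nhdsWithin 0 (Set.Iio 0)) (nhds 0))
    (l : ℝ → ℝ) (hl : ContinuousOn l (Set.Ioi 0))
    (hlim : ∀ γ : ℝ, 0 < γ →
      Tendsto (fun z : ℝ => f z * ((dOn Set.univ γ (A₀ z)).toNat : ℝ))
        (nhdsWithin 0 (Set.Iio 0)) (nhds (l γ))) :
    ∀ γ : ℝ, 0 < γ →
      Tendsto (fun z : ℝ => f z * ((dOn Set.univ γ (A₀ z + A₁ z)).toNat : ℝ))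
        (nhdsWithin 0 (Set.Iio 0)) (nhds (l γ)) := by
  intro γ hγ
  refine tendsto_of_forall_eventually_mem_uIcc fun δ hδ => ?_
  obtain ⟨ε, hε, hε_sub, hε_add⟩ :=
    ((hl γ hγ).continuousAt (Ioi_mem_nhds hγ)).exists_sub_add_mem_ball hγ hδ
  refine ⟨fun z => f z * ((dOn univ (γ - ε) (A₀ z)).toNat + (dOn univ (ε / 2) (A₁ 0)).toNat),
    fun z => f z * ((dOn univ (γ + ε) (A₀ z)).toNat - (dOn univ (ε / 2) (-A₁ 0)).toNat),
    _, hε_sub, _, hε_add, ?_, ?_, ?_⟩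
  · simpa [mul_add] using (hlim _ (sub_pos.2 hε.2)).add (hf.mul_const _)
  · simpa [mul_sub] using (hlim _ (by linarith [hε.1])).sub (hf.mul_const _)
  have hA₁ : Tendsto A₁ (𝓝[<] 0) (𝓝 (A₁ 0)) :=
    (hA₁cont 0 self_mem_Iic).mono_left (nhdsWithin_mono _ Iio_subset_Iic_self)
  filter_upwards [hA₁.eventually (closedBall_mem_nhds _ (half_pos hε.1)), self_mem_nhdsWithin]
    with z hz hz0
  rw [dist_eq_norm] at hz
  rw [← image_const_mul_uIcc]
  exact mem_image_of_mem _ <| Icc_subset_uIcc' <| toNat_dOn_univ_add_mem_Icc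
    (hA₀compact z hz0) (hA₁compact z hz0.le) (hA₁compact 0 le_rfl) hε hz

/-- Perturbation lemma (Lemma 4.9 of Sobolev): if `A₀(z)` is compact self-adjoint and
norm-continuous on `(-∞,0)`, `A₁(z)` is compact self-adjoint and norm-continuous on
`(-∞,0]`, `f(z) → 0` as `z → 0⁻`, and `f(z)·d(γ, A₀(z)) → l(γ)` for every `γ > 0` with
`l` continuous on `(0,∞)`, then also `f(z)·d(γ, A₀(z)+A₁(z)) → l(γ)` for every `γ > 0`. -/
theorem weighted_counting_perturbation
    {H : Type*} [NormedAddCommGroup H] [InnerProductSpace ℝ H] [CompleteSpace H]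
    (A₀ A₁ : ℝ → H →L[ℝ] H)
    (hA₀compact : ∀ z : ℝ, z < 0 → IsCompactOperator (A₀ z))
    (hA₀sa : ∀ z : ℝ, z < 0 → ∀ u v : H, (inner ℝ (A₀ z u) v : ℝ) = inner ℝ u (A₀ z v))
    (hA₀cont : ContinuousOn A₀ (Set.Iio 0))
    (hA₁compact : ∀ z : ℝ, z ≤ 0 → IsCompactOperator (A₁ z))
    (hA₁sa : ∀ z : ℝ, z ≤ 0 → ∀ u v : H, (inner ℝ (A₁ z u) v : ℝ) = inner ℝ u (A₁ z v))
    (hA₁cont : ContinuousOn A₁ (Set.Iic 0))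
    (f : ℝ → ℝ) (hf : Tendsto f (nhdsWithin 0 (Set.Iio 0)) (nhds 0))
    (l : ℝ → ℝ) (hl : ContinuousOn l (Set.Ioi 0))
    (hlim : ∀ γ : ℝ, 0 < γ →
      Tendsto (fun z : ℝ => f z * ((dOn Set.univ γ (A₀ z)).toNat : ℝ))
        (nhdsWithin 0 (Set.Iio 0)) (nhds (l γ))) :
    ∀ γ : ℝ, 0 < γ →
      Tendsto (fun z : ℝ => f z * ((dOn Set.univ γ (A₀ z + A₁ z)).toNat : ℝ))
        (nhdsWithin 0 (Set.Iio 0)) (nhds (l γ)) :=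
  weighted_counting_perturbation_general A₀ A₁ hA₀compact hA₁compact hA₁cont f hf l hl hlim

end
end
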